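/- arXiv:2406.19925 — 4 statements merged into one kernel-verified Lean document; each statement's English description precedes it below -/
import Mathlib

section
/- Let d ≥ 2, λ > 0, and let Λ be a nonempty finite subset of the sphere {x ∈ ℝ^d : |x| = λ}. Suppose (c_k)_{k∈Λ} are complex numbers such that ∑_{k∈Λ} c_k k^α = 0 for every multi-index α ∈ ℕ^d with |α| ≤ N and α_d ≤ 1. Then in fact ∑_{k∈Λ} c_k k^α = 0 for every α ∈ ℕ^d with |α| ≤ N. -/
/-- If all points of `Λ` lie on the sphere of radius `λ` and `∑ c_k k^α = 0` holds for
all multi-indices of total degree `≤ N` with last entry `≤ 1`, then it holds for all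
multi-indices of total degree `≤ N`. -/
theorem stmt2 (d : ℕ) (hd : 2 ≤ d) (lam : ℝ) (hlam : 0 < lam) (N : ℕ)
    (Λ : Finset (Fin d → ℝ)) (hΛ : Λ.Nonempty)
    (hsphere : ∀ k ∈ Λ, ∑ j, (k j) ^ 2 = lam ^ 2)
    (c : (Fin d → ℝ) → ℂ)
    (h : ∀ α : Fin d → ℕ, (∑ j, α j) ≤ N → α ⟨d - 1, by omega⟩ ≤ 1 →
      ∑ k ∈ Λ, c k * ∏ j, ((k j : ℂ) ^ α j) = 0) :
    ∀ α : Fin d → ℕ, (∑ j, α j) ≤ N →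
      ∑ k ∈ Λ, c k * ∏ j, ((k j : ℂ) ^ α j) = 0 := by
  set m : Fin d := ⟨d - 1, by omega⟩ with hm
  suffices H : ∀ n, ∀ α : Fin d → ℕ, (∑ j, α j) ≤ N → α m = n →
      ∑ k ∈ Λ, c k * ∏ j, ((k j : ℂ) ^ α j) = 0 by
    intro α hα; exact H (α m) α hα rfl
  intro n
  induction n using Nat.strong_induction_on with
  | _ n ih =>
    intro α hα hαm
    by_cases hn : n ≤ 1
    · exact h α hα (hαm ▸ hn)
    obtain ⟨n', rfl⟩ : ∃ n', n = n' + 2 := ⟨n - 2, by omega⟩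
    set β : Fin d → ℕ := Function.update α m n' with hβ
    have hβm : β m = n' := Function.update_self _ _ _
    have hβj : ∀ j, j ≠ m → β j = α j := fun j hj => Function.update_of_ne hj _ _
    have hsum : ∑ j, β j + 2 = ∑ j, α j := by
      have h1 : ∑ j, β j = (∑ j ∈ Finset.univ \ {m}, β j) + β m :=
        Finset.sum_eq_sum_sdiff_singleton_add (Finset.mem_univ m) β
      have h2 : ∑ j, α j = (∑ j ∈ Finset.univ \ {m}, α j) + α m :=
        Finset.sum_eq_sum_sdiff_singleton_add (Finset.mem_univ m) α
      have h3 : ∑ j ∈ Finset.univ \ {m}, β j = ∑ j ∈ Finset.univ \ {m}, α j := by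
        apply Finset.sum_congr rfl
        intro j hj
        exact hβj j (by simpa using (Finset.mem_sdiff.mp hj).2)
      omega
    have hβsum : ∑ j, β j ≤ N := by omega
    have hprod : ∀ k : Fin d → ℝ, (∏ j, ((k j : ℂ) ^ α j))
        = ((k m : ℂ))^2 * ∏ j, ((k j : ℂ) ^ β j) := by
      intro k
      rw [Finset.prod_eq_prod_diff_singleton_mul (Finset.mem_univ m)
            (fun j => (k j : ℂ) ^ α j),
          Finset.prod_eq_prod_diff_singleton_mul (Finset.mem_univ m)
            (fun j => (k j : ℂ) ^ β j)]
      have heq : ∏ j ∈ Finset.univ \ {m}, ((k j : ℂ) ^ α j)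
          = ∏ j ∈ Finset.univ \ {m}, ((k j : ℂ) ^ β j) := by
        apply Finset.prod_congr rfl
        intro j hj
        rw [hβj j (by simpa using (Finset.mem_sdiff.mp hj).2)]
      rw [heq, hαm, hβm]
      ring
    have hsph : ∀ k ∈ Λ, ((k m : ℂ))^2
        = (lam : ℂ)^2 - ∑ j ∈ Finset.univ \ {m}, ((k j : ℂ))^2 := by
      intro k hk
      have h0 := hsphere k hk
      have h2 : ∑ j, ((k j : ℂ))^2 = (lam : ℂ)^2 := by
        have := congrArg (fun x : ℝ => (x : ℂ)) h0
        push_cast at this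
        exact this
      rw [Finset.sum_eq_sum_sdiff_singleton_add (Finset.mem_univ m)
        (fun j => ((k j : ℂ))^2)] at h2
      linear_combination h2
    calc ∑ k ∈ Λ, c k * ∏ j, ((k j : ℂ) ^ α j)
        = ∑ k ∈ Λ, ((lam : ℂ)^2 * (c k * ∏ j, ((k j : ℂ) ^ β j))
            - ∑ j ∈ Finset.univ \ {m},
              (c k * ∏ i, ((k i : ℂ) ^ (Function.update β j (β j + 2)) i))) := by
          apply Finset.sum_congr rfl
          intro k hk
          have hterm : ∀ j ∈ Finset.univ \ {m},
              c k * ∏ i, ((k i : ℂ) ^ (Function.update β j (β j + 2)) i)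
              = ((k j : ℂ))^2 * (c k * ∏ i, ((k i : ℂ) ^ β i)) := by
            intro j hj
            have hpj : ∏ i, ((k i : ℂ) ^ (Function.update β j (β j + 2)) i)
                = ((k j : ℂ))^2 * ∏ i, ((k i : ℂ) ^ β i) := by
              rw [Finset.prod_eq_prod_diff_singleton_mul (Finset.mem_univ j)
                    (fun i => (k i : ℂ) ^ (Function.update β j (β j + 2)) i),
                  Finset.prod_eq_prod_diff_singleton_mul (Finset.mem_univ j)
                    (fun i => (k i : ℂ) ^ β i)]
              have heq : ∏ i ∈ Finset.univ \ {j},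
                  ((k i : ℂ) ^ (Function.update β j (β j + 2)) i)
                  = ∏ i ∈ Finset.univ \ {j}, ((k i : ℂ) ^ β i) := by
                apply Finset.prod_congr rfl
                intro i hi
                rw [Function.update_of_ne (by simpa using (Finset.mem_sdiff.mp hi).2)]
              rw [heq, Function.update_self]
              ring
            rw [hpj]; ring
          rw [Finset.sum_congr rfl hterm, ← Finset.sum_mul]
          rw [hprod k, hsph k hk]
          ring
      _ = (lam : ℂ)^2 * ∑ k ∈ Λ, (c k * ∏ j, ((k j : ℂ) ^ β j))
            - ∑ j ∈ Finset.univ \ {m}, ∑ k ∈ Λ,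
              (c k * ∏ i, ((k i : ℂ) ^ (Function.update β j (β j + 2)) i)) := by
          rw [Finset.sum_sub_distrib, ← Finset.mul_sum, Finset.sum_comm]
      _ = 0 := by
          rw [ih n' (by omega) β hβsum hβm]
          have hz : ∀ j ∈ Finset.univ \ {m},
              ∑ k ∈ Λ, (c k * ∏ i, ((k i : ℂ) ^ (Function.update β j (β j + 2)) i)) = 0 := by
            intro j hj
            have hjm : j ≠ m := by simpa using (Finset.mem_sdiff.mp hj).2
            apply ih n' (by omega)
            · have h1 : ∑ i, (Function.update β j (β j + 2)) i
                  = (∑ i ∈ Finset.univ \ {j}, (Function.update β j (β j + 2)) i)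
                      + (β j + 2) := by
                rw [Finset.sum_eq_sum_sdiff_singleton_add (Finset.mem_univ j)]
                rw [Function.update_self]
              have h2 : ∑ i ∈ Finset.univ \ {j}, (Function.update β j (β j + 2)) i
                  = ∑ i ∈ Finset.univ \ {j}, β i := by
                apply Finset.sum_congr rfl
                intro i hi
                rw [Function.update_of_ne (by simpa using (Finset.mem_sdiff.mp hi).2)]
              have h3 : ∑ i, β i = (∑ i ∈ Finset.univ \ {j}, β i) + β j :=
                Finset.sum_eq_sum_sdiff_singleton_add (Finset.mem_univ j) β
              omega
            · rw [Function.update_of_ne (Ne.symm hjm), hβm]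
          rw [Finset.sum_congr rfl hz]
          simp
end

section
/- Jarník's theorem: for λ > 0, any arc of the circle {x ∈ ℝ² : |x| = λ} of arc-length strictly less than √2 · λ^{1/3} contains at most two points of ℤ². -/
open Real

/-- Trig identity: `sin u + sin v - sin (u+v) = 4 sin(u/2) sin(v/2) sin((u+v)/2)`. -/
lemma jarnik_trig (x y : ℝ) :
    Real.sin (2*x) + Real.sin (2*y) - Real.sin (2*(x+y))
      = 4 * Real.sin x * Real.sin y * Real.sin (x+y) := by
  rw [Real.sin_two_mul, Real.sin_two_mul, Real.sin_two_mul, Real.sin_add, Real.cos_add]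
  have hx := Real.sin_sq_add_cos_sq x
  have hy := Real.sin_sq_add_cos_sq y
  linear_combination (-(2 * Real.sin x * Real.cos x)) * hy +
    (-(2 * Real.sin y * Real.cos y)) * hx

/-- If the half-angle sine of the difference vanishes, the two points coincide. -/
lemma jarnik_ne (lam : ℝ) (hlam : 0 < lam) (p q : Fin 2 → ℤ) (hpq : p ≠ q) (θ φ : ℝ)
    (hp : (p 0 : ℝ) = lam * Real.cos θ ∧ (p 1 : ℝ) = lam * Real.sin θ)
    (hq : (q 0 : ℝ) = lam * Real.cos φ ∧ (q 1 : ℝ) = lam * Real.sin φ) :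
    Real.sin ((φ - θ) / 2) ≠ 0 := by
  intro h0
  have e : 2 * ((φ - θ) / 2) = φ - θ := by ring
  have hc2 : Real.cos ((φ - θ) / 2) ^ 2 = 1 := by
    have h := Real.sin_sq_add_cos_sq ((φ - θ) / 2)
    rw [h0] at h
    simpa using h
  have hcos : Real.cos (φ - θ) = 1 := by
    have h := Real.cos_two_mul ((φ - θ) / 2)
    rw [e] at h
    rw [h, hc2]; norm_num
  have hsin : Real.sin (φ - θ) = 0 := by
    have h := Real.sin_two_mul ((φ - θ) / 2)
    rw [e, h0] at h
    simpa using h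
  have hc : Real.cos φ = Real.cos θ := by
    have : Real.cos (θ + (φ - θ)) = Real.cos θ * Real.cos (φ - θ) - Real.sin θ * Real.sin (φ - θ) :=
      Real.cos_add _ _
    rw [hcos, hsin] at this
    simpa using this
  have hs : Real.sin φ = Real.sin θ := by
    have : Real.sin (θ + (φ - θ)) = Real.sin θ * Real.cos (φ - θ) + Real.cos θ * Real.sin (φ - θ) :=
      Real.sin_add _ _
    rw [hcos, hsin] at this
    simpa using this
  apply hpq
  funext i
  fin_cases i
  · have : (p 0 : ℝ) = (q 0 : ℝ) := by rw [hp.1, hq.1, hc]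
    exact_mod_cast this
  · have : (p 1 : ℝ) = (q 1 : ℝ) := by rw [hp.2, hq.2, hs]
    exact_mod_cast this

lemma jarnik_aux (A B M : ℝ) (hA0 : 0 ≤ A) (hB0 : 0 ≤ B) (hAB : A + B ≤ M) :
    A * B * (A + B) ≤ M ^ 3 / 4 := by
  have h3 : (A + B) ^ 3 ≤ M ^ 3 := pow_le_pow_left₀ (by linarith) hAB 3
  nlinarith [mul_nonneg (add_nonneg hA0 hB0) (sq_nonneg (A - B))]

lemma jarnik_aux2 (A B M : ℝ) (hB0 : 0 ≤ B) (hBA : B ≤ A) (hA : A ≤ M) :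
    A * B * (A - B) ≤ M ^ 3 / 4 := by
  have h3 : A ^ 3 ≤ M ^ 3 := pow_le_pow_left₀ (hB0.trans hBA) hA 3
  nlinarith [mul_nonneg (hB0.trans hBA) (sq_nonneg (A - 2 * B))]

/-- If `|x| ≤ M`, `|y| ≤ M`, `|x+y| ≤ M` then `|x·y·(x+y)| ≤ M³/4`. -/
lemma jarnik_prod (x y M : ℝ) (hx : |x| ≤ M) (hy : |y| ≤ M) (hxy : |x + y| ≤ M) :
    |x * y * (x + y)| ≤ M ^ 3 / 4 := by
  have hM0 : 0 ≤ M := (abs_nonneg x).trans hx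
  have hM3 : 0 ≤ M ^ 3 := pow_nonneg hM0 3
  have hx1 := abs_le.1 hx
  have hy1 := abs_le.1 hy
  have hxy1 := abs_le.1 hxy
  rw [abs_le]
  rcases le_total 0 x with hx0 | hx0 <;> rcases le_total 0 y with hy0 | hy0
  · have h1 := jarnik_aux x y M hx0 hy0 hxy1.2
    have h2 : 0 ≤ x * y * (x + y) :=
      mul_nonneg (mul_nonneg hx0 hy0) (add_nonneg hx0 hy0)
    constructor <;> linarith
  · rcases le_total (-y) x with h | h
    · have h1 := jarnik_aux2 x (-y) M (by linarith) (by linarith) hx1.2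
      have h2 : x * y * (x + y) ≤ 0 := by
        have : 0 ≤ x * (-y) * (x + y) :=
          mul_nonneg (mul_nonneg hx0 (by linarith)) (by linarith)
        nlinarith [this]
      constructor <;> nlinarith [h1, h2]
    · have h1 := jarnik_aux2 (-y) x M hx0 h (by linarith)
      have h2 : 0 ≤ x * y * (x + y) := by
        have : 0 ≤ x * (-y) * (-(x + y)) :=
          mul_nonneg (mul_nonneg hx0 (by linarith)) (by linarith)
        nlinarith [this]
      constructor <;> nlinarith [h1, h2]
  · rcases le_total (-x) y with h | h
    · have h1 := jarnik_aux2 y (-x) M (by linarith) (by linarith) hy1.2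
      have h2 : x * y * (x + y) ≤ 0 := by
        have : 0 ≤ (-x) * y * (x + y) :=
          mul_nonneg (mul_nonneg (by linarith) hy0) (by linarith)
        nlinarith [this]
      constructor <;> nlinarith [h1, h2]
    · have h1 := jarnik_aux2 (-x) y M hy0 h (by linarith)
      have h2 : 0 ≤ x * y * (x + y) := by
        have : 0 ≤ (-x) * y * (-(x + y)) :=
          mul_nonneg (mul_nonneg (by linarith) hy0) (by linarith)
        nlinarith [this]
      constructor <;> nlinarith [h1, h2]
  · have h1 := jarnik_aux (-x) (-y) M (by linarith) (by linarith) (by linarith)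
    have h2 : x * y * (x + y) ≤ 0 := by
      have : 0 ≤ (-x) * (-y) * (-(x + y)) :=
        mul_nonneg (mul_nonneg (by linarith) (by linarith)) (by linarith)
      nlinarith [this]
    constructor <;> nlinarith [h1, h2]

set_option maxHeartbeats 1000000 in
/-- Jarník's theorem: any arc of the circle of radius `λ` of arc-length
`L < √2 · λ^{1/3}` contains at most two integer points. (Three distinct integer
points on such an arc yield a contradiction; points on the arc are parametrized by
angles in an interval of width `L/λ`.) -/
theorem stmt12 (lam : ℝ) (hlam : 0 < lam)
    (k₁ k₂ k₃ : Fin 2 → ℤ) (h12 : k₁ ≠ k₂) (h13 : k₁ ≠ k₃) (h23 : k₂ ≠ k₃)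
    (a L : ℝ) (hL : L < Real.sqrt 2 * lam ^ ((1 : ℝ) / 3))
    (θ₁ θ₂ θ₃ : ℝ)
    (hθ₁ : θ₁ ∈ Set.Icc a (a + L / lam)) (hθ₂ : θ₂ ∈ Set.Icc a (a + L / lam))
    (hθ₃ : θ₃ ∈ Set.Icc a (a + L / lam))
    (h₁ : (k₁ 0 : ℝ) = lam * Real.cos θ₁ ∧ (k₁ 1 : ℝ) = lam * Real.sin θ₁)
    (h₂ : (k₂ 0 : ℝ) = lam * Real.cos θ₂ ∧ (k₂ 1 : ℝ) = lam * Real.sin θ₂)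
    (h₃ : (k₃ 0 : ℝ) = lam * Real.cos θ₃ ∧ (k₃ 1 : ℝ) = lam * Real.sin θ₃) :
    False := by
  set M := L / lam with hM
  -- integer determinant
  set d : ℤ := (k₂ 0 - k₁ 0) * (k₃ 1 - k₁ 1) - (k₂ 1 - k₁ 1) * (k₃ 0 - k₁ 0) with hd
  set u := θ₂ - θ₁ with hu
  set v := θ₃ - θ₂ with hv
  -- determinant formula
  have hdet : (d : ℝ) = 4 * lam^2 * (Real.sin (u/2) * Real.sin (v/2) * Real.sin ((u+v)/2)) := by
    have key := jarnik_trig (u/2) (v/2)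
    have e1 : 2 * (u/2) = θ₂ - θ₁ := by ring
    have e2 : 2 * (v/2) = θ₃ - θ₂ := by ring
    have e3 : 2 * (u/2 + v/2) = θ₃ - θ₁ := by rw [hu, hv]; ring
    rw [e1, e2, e3] at key
    have expand : lam^2 * (Real.sin (θ₂ - θ₁) + Real.sin (θ₃ - θ₂) - Real.sin (θ₃ - θ₁))
        = (d : ℝ) := by
      push_cast [hd]
      rw [h₁.1, h₁.2, h₂.1, h₂.2, h₃.1, h₃.2, Real.sin_sub, Real.sin_sub, Real.sin_sub]
      ring
    have e4 : u/2 + v/2 = (u+v)/2 := by ring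
    rw [← expand, key, e4]
    ring
  -- d ≠ 0
  have hd12 := jarnik_ne lam hlam k₁ k₂ h12 θ₁ θ₂ h₁ h₂
  have hd23 := jarnik_ne lam hlam k₂ k₃ h23 θ₂ θ₃ h₂ h₃
  have hd13 := jarnik_ne lam hlam k₁ k₃ h13 θ₁ θ₃ h₁ h₃
  have huv : (θ₃ - θ₁) / 2 = (u+v)/2 := by rw [hu, hv]; ring
  rw [huv] at hd13
  have hdne : d ≠ 0 := by
    intro h0
    rw [h0] at hdet
    simp only [Int.cast_zero] at hdet
    have := mul_ne_zero (mul_ne_zero hd12 hd23) hd13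
    have hl4 : (4 : ℝ) * lam^2 ≠ 0 := by positivity
    rcases mul_eq_zero.1 hdet.symm with h | h
    · exact hl4 h
    · rw [mul_assoc] at this
      exact this (by rw [← mul_assoc]; exact h)
  have hone : (1 : ℝ) ≤ |(d : ℝ)| := by
    have : (1 : ℤ) ≤ |d| := Int.one_le_abs hdne
    exact_mod_cast this
  -- angle bounds
  have hM0 : 0 ≤ M := by have h1 := hθ₁.1; have h2 := hθ₁.2; linarith
  obtain ⟨ha1, hb1⟩ := hθ₁
  obtain ⟨ha2, hb2⟩ := hθ₂
  obtain ⟨ha3, hb3⟩ := hθ₃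
  have hau : |u/2| ≤ M/2 := by rw [abs_le]; constructor <;> simp only [hu] <;> linarith
  have hav : |v/2| ≤ M/2 := by rw [abs_le]; constructor <;> simp only [hv] <;> linarith
  have hauv : |u/2 + v/2| ≤ M/2 := by
    rw [abs_le]; constructor <;> simp only [hu, hv] <;> [linarith; linarith]
  have bprod := jarnik_prod (u/2) (v/2) (M/2) hau hav hauv
  have bsin : |Real.sin (u/2) * Real.sin (v/2) * Real.sin ((u+v)/2)| ≤ M^3 / 32 := by
    have e : (u+v)/2 = u/2 + v/2 := by ring
    rw [e, abs_mul, abs_mul]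
    calc |Real.sin (u/2)| * |Real.sin (v/2)| * |Real.sin (u/2 + v/2)|
        ≤ |u/2| * |v/2| * |u/2 + v/2| :=
          mul_le_mul
            (mul_le_mul Real.abs_sin_le_abs Real.abs_sin_le_abs (abs_nonneg _) (abs_nonneg _))
            Real.abs_sin_le_abs (abs_nonneg _)
            (mul_nonneg (abs_nonneg _) (abs_nonneg _))
      _ = |(u/2) * (v/2) * (u/2 + v/2)| := by rw [abs_mul, abs_mul]
      _ ≤ (M/2)^3 / 4 := bprod
      _ = M^3 / 32 := by ring
  -- combine: 1 ≤ |d| ≤ 4 λ² M³/32 = L³/(8λ)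
  have hcomb : (1 : ℝ) ≤ L^3 / (8 * lam) := by
    have habs : |(d : ℝ)| = 4 * lam^2 * |Real.sin (u/2) * Real.sin (v/2) * Real.sin ((u+v)/2)| := by
      rw [hdet, abs_mul, abs_of_nonneg (by positivity : (0:ℝ) ≤ 4 * lam^2)]
    have : (1 : ℝ) ≤ 4 * lam^2 * (M^3 / 32) := by
      refine hone.trans ?_
      rw [habs]
      have h4 : (0:ℝ) ≤ 4 * lam^2 := by positivity
      exact mul_le_mul_of_nonneg_left bsin h4
    have hMe : M = L / lam := hM
    rw [hMe] at this
    have hlam' : lam ≠ 0 := ne_of_gt hlam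
    calc (1:ℝ) ≤ 4 * lam^2 * ((L/lam)^3 / 32) := this
      _ = L^3 / (8 * lam) := by field_simp; ring
  have hL0 : 0 ≤ L := by
    have h' : 0 ≤ L / lam := hM ▸ hM0
    have h'' : L / lam * lam = L := div_mul_cancel₀ L (ne_of_gt hlam)
    nlinarith [mul_nonneg h' hlam.le]
  -- final contradiction
  have hcube : L^3 < (Real.sqrt 2 * lam ^ ((1:ℝ)/3))^3 := by
    exact pow_lt_pow_left₀ hL hL0 (by norm_num)
  have hs2 : Real.sqrt 2 ^ 3 = 2 * Real.sqrt 2 := by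
    rw [pow_succ, Real.sq_sqrt (by norm_num : (0:ℝ) ≤ 2)]
  have hl3 : (lam ^ ((1:ℝ)/3))^(3:ℕ) = lam := by
    rw [← Real.rpow_natCast (lam ^ ((1:ℝ)/3)) 3, ← Real.rpow_mul hlam.le]
    norm_num
  have hrhs : (Real.sqrt 2 * lam ^ ((1:ℝ)/3))^3 = 2 * Real.sqrt 2 * lam := by
    rw [mul_pow, hs2, hl3]
  have hsq2 : Real.sqrt 2 < 2 := (Real.sqrt_lt' (by norm_num)).2 (by norm_num)
  rw [hrhs] at hcube
  have h8 : 8 * lam ≤ L^3 := by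
    have h8pos : (0:ℝ) < 8 * lam := by positivity
    calc 8 * lam = 1 * (8 * lam) := by ring
      _ ≤ L^3 / (8*lam) * (8*lam) := by
          exact mul_le_mul_of_nonneg_right hcomb h8pos.le
      _ = L^3 := by field_simp
  have hlt : 2 * Real.sqrt 2 * lam < 8 * lam := by
    have hpos : 0 < 8 - 2 * Real.sqrt 2 := by linarith
    have hmul := mul_pos hpos hlam
    have he : (8 - 2 * Real.sqrt 2) * lam = 8 * lam - 2 * (Real.sqrt 2 * lam) := by ring
    rw [he] at hmul
    linarith
  linarith [hcube, h8, hlt]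
end

section
/- Let Q = ∏_{j=1}^d I_j be a box in ℝ^d (each I_j a nonempty bounded open interval) and E = ∏_{j=1}^d J_j with J_j ⊂ I_j measurable of positive measure. Suppose for each j there is a constant κ_j ∈ (0,1] such that every univariate exponential sum with frequencies in a fixed finite set Z_j ⊂ ℝ satisfies (⨍_{J_j} |h|^p)^{1/p} ≥ κ_j (⨍_{I_j} |h|^p)^{1/p}. Then every f(x) = ∑_{k ∈ ∏_j Z_j} c_k e^{ik·x} satisfies (⨍_E |f|^p)^{1/p} ≥ (∏_{j=1}^d κ_j) (⨍_Q |f|^p)^{1/p}. -/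
open MeasureTheory Complex

open scoped ENNReal

/-!
Freezing all coordinates but one turns a multivariate exponential sum with frequencies in
`∏ j, Z j` into a univariate one with frequencies in `Z j`, so the one-dimensional inequality,
raised to the power `p`, holds in every variable separately for the averages `⨍⁻` of `|f|^p`.
The normalized restriction of a product measure to a box is the product of the normalized
restrictions of the factors, so Tonelli's theorem and induction on the dimension multiply the
constants `κ j ^ p`.
-/

theorem Real.mul_rpow_one_div_le_rpow_one_div_iff {κ A B p : ℝ} (hκ : 0 ≤ κ) (hA : 0 ≤ A) (hB : 0 ≤ B)
    (hp : 0 < p) : κ * A ^ (1 / p) ≤ B ^ (1 / p) ↔ κ ^ p * A ≤ B := by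
  have hlhs : κ * A ^ (1 / p) = (κ ^ p * A) ^ (1 / p) := by
    rw [Real.mul_rpow (by positivity) hA, ← Real.rpow_mul hκ, mul_one_div_cancel hp.ne',
      Real.rpow_one]
  rw [hlhs, Real.rpow_le_rpow_iff (by positivity) hB (by positivity)]

namespace MeasureTheory

section Average

variable {X : Type*} [MeasurableSpace X] {μ : Measure X} {f : X → ℝ}

theorem ofReal_setAverage_eq_setLAverage {s : Set X} (hf : IntegrableOn f s μ)
    (hf₀ : ∀ x, 0 ≤ f x) :
    ENNReal.ofReal (⨍ x in s, f x ∂μ) = ⨍⁻ x in s, ENNReal.ofReal (f x) ∂μ :=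
  (ofReal_setAverage hf (ae_of_all _ hf₀)).trans (setLAverage_eq μ _ s).symm

theorem mul_setAverage_rpow_le_iff {s t : Set X} (hf₀ : ∀ x, 0 ≤ f x)
    (hs : IntegrableOn f s μ) (ht : IntegrableOn f t μ) {κ p : ℝ} (hκ : 0 ≤ κ) (hp : 0 < p) :
    κ * (⨍ x in s, f x ∂μ) ^ (1 / p) ≤ (⨍ x in t, f x ∂μ) ^ (1 / p) ↔
      ENNReal.ofReal (κ ^ p) * ⨍⁻ x in s, ENNReal.ofReal (f x) ∂μ ≤
        ⨍⁻ x in t, ENNReal.ofReal (f x) ∂μ := by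
  have hav₀ : ∀ u, 0 ≤ ⨍ x in u, f x ∂μ := fun u => integral_nonneg hf₀
  rw [← ofReal_setAverage_eq_setLAverage hs hf₀, ← ofReal_setAverage_eq_setLAverage ht hf₀,
    ← ENNReal.ofReal_mul (by positivity), ENNReal.ofReal_le_ofReal_iff (hav₀ t),
    Real.mul_rpow_one_div_le_rpow_one_div_iff hκ (hav₀ s) (hav₀ t) hp]

end Average

section FinSucc

variable {n : ℕ} {α : Fin (n + 1) → Type*} [∀ i, MeasurableSpace (α i)]

theorem measurable_fin_cons :
    Measurable fun p : α 0 × (∀ j : Fin n, α j.succ) => (Fin.cons p.1 p.2 : ∀ i, α i) :=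
  measurable_pi_iff.2 fun i => Fin.cases (by simpa using measurable_fst)
    (fun j => by simpa using measurable_snd.eval (a := j)) i

theorem lintegral_pi_fin_succ (μ : ∀ i, Measure (α i)) [∀ i, SigmaFinite (μ i)]
    {F : (∀ i, α i) → ℝ≥0∞} (hF : Measurable F) :
    ∫⁻ x, F x ∂Measure.pi μ =
      ∫⁻ t, ∫⁻ y, F (Fin.cons t y) ∂Measure.pi (fun j => μ j.succ) ∂μ 0 := by
  have e := (measurePreserving_piFinSuccAbove μ 0).symm
  rw [← e.lintegral_comp hF]
  refine (lintegral_prod _ (hF.comp e.measurable).aemeasurable).trans ?_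
  refine lintegral_congr fun t => lintegral_congr fun y => congrArg F ?_
  exact Fin.insertNth_zero t y

end FinSucc

theorem prod_mul_lintegral_pi_le {n : ℕ} {α : Fin n → Type*} [∀ i, MeasurableSpace (α i)]
    (μ ν : ∀ i, Measure (α i)) [∀ i, SigmaFinite (μ i)] [∀ i, SigmaFinite (ν i)]
    (C : Fin n → ℝ≥0∞) {F : (∀ i, α i) → ℝ≥0∞} (hF : Measurable F)
    (h : ∀ i (x : ∀ i, α i),
      C i * ∫⁻ t, F (Function.update x i t) ∂μ i ≤ ∫⁻ t, F (Function.update x i t) ∂ν i) :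
    (∏ i, C i) * ∫⁻ x, F x ∂Measure.pi μ ≤ ∫⁻ x, F x ∂Measure.pi ν := by
  induction n with
  | zero => simp [Measure.pi_of_empty μ, Measure.pi_of_empty ν]
  | succ n ih =>
    have hF' : Measurable fun p : α 0 × (∀ j : Fin n, α j.succ) => F (Fin.cons p.1 p.2) :=
      hF.comp measurable_fin_cons
    rw [lintegral_pi_fin_succ μ hF, lintegral_pi_fin_succ ν hF, Fin.prod_univ_succ]
    calc C 0 * (∏ j : Fin n, C j.succ) *
          ∫⁻ t, ∫⁻ y, F (Fin.cons t y) ∂Measure.pi (fun j => μ j.succ) ∂μ 0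
        = (∏ j : Fin n, C j.succ) *
          (C 0 * ∫⁻ y, ∫⁻ t, F (Fin.cons t y) ∂μ 0 ∂Measure.pi (fun j => μ j.succ)) := by
          rw [lintegral_lintegral_swap hF'.aemeasurable]; ring
      _ ≤ (∏ j : Fin n, C j.succ) *
          ∫⁻ y, ∫⁻ t, F (Fin.cons t y) ∂ν 0 ∂Measure.pi (fun j => μ j.succ) := by
          gcongr
          refine (lintegral_const_mul_le _ _).trans (lintegral_mono fun y => ?_)
          obtain _ | ⟨⟨t₀⟩⟩ := isEmpty_or_nonempty (α 0)
          · simp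
          simpa [Fin.update_cons_zero] using h 0 (Fin.cons t₀ y)
      _ ≤ ∫⁻ t, (∏ j : Fin n, C j.succ) *
          ∫⁻ y, F (Fin.cons t y) ∂Measure.pi (fun j => μ j.succ) ∂ν 0 := by
          rw [lintegral_lintegral_swap (f := fun y t => F (Fin.cons t y))
            (hF'.comp measurable_swap).aemeasurable]
          exact lintegral_const_mul_le _ _
      _ ≤ ∫⁻ t, ∫⁻ y, F (Fin.cons t y) ∂Measure.pi (fun j => ν j.succ) ∂ν 0 := by
          refine lintegral_mono fun t => ih _ _ _ (hF'.comp measurable_prodMk_left) fun i y => ?_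
          simpa [Fin.cons_update] using h i.succ (Fin.cons t y)

section Cond

open scoped ProbabilityTheory

theorem setLAverage_eq_lintegral_cond {X : Type*} [MeasurableSpace X]
    (μ : Measure X) (s : Set X) (f : X → ℝ≥0∞) : ⨍⁻ x in s, f x ∂μ = ∫⁻ x, f x ∂μ[|s] :=
  setLAverage_eq' μ f s

theorem Measure.pi_cond {ι : Type*} [Fintype ι] {α : ι → Type*}
    [∀ i, MeasurableSpace (α i)] (μ : ∀ i, Measure (α i)) [∀ i, SigmaFinite (μ i)]
    {s : ∀ i, Set (α i)} (hs : ∀ i, MeasurableSet (s i))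
    (hs₀ : ∀ i, μ i (s i) ≠ 0) (hs_top : ∀ i, μ i (s i) ≠ ∞) :
    Measure.pi (fun i => (μ i)[|s i]) = (Measure.pi μ)[|Set.univ.pi s] := by
  have : ∀ i, IsProbabilityMeasure ((μ i)[|s i]) := fun i =>
    ProbabilityTheory.cond_isProbabilityMeasure_of_finite (hs₀ i) (hs_top i)
  refine Measure.pi_eq (μ := fun i => (μ i)[|s i]) fun t _ => ?_
  simp_rw [ProbabilityTheory.cond_apply (MeasurableSet.univ_pi hs),
    ProbabilityTheory.cond_apply (hs _), ← Set.pi_inter_distrib, Measure.pi_pi,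
    ENNReal.prod_inv_distrib fun i _ j _ _ => Or.inr (hs_top j), Finset.prod_mul_distrib]

theorem prod_mul_setLAverage_pi_le {n : ℕ} {α : Fin n → Type*} [∀ i, MeasurableSpace (α i)]
    (μ : ∀ i, Measure (α i)) [∀ i, SigmaFinite (μ i)] {s t : ∀ i, Set (α i)}
    (hs : ∀ i, MeasurableSet (s i)) (hs₀ : ∀ i, μ i (s i) ≠ 0) (hs_top : ∀ i, μ i (s i) ≠ ∞)
    (ht : ∀ i, MeasurableSet (t i)) (ht₀ : ∀ i, μ i (t i) ≠ 0) (ht_top : ∀ i, μ i (t i) ≠ ∞)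
    (C : Fin n → ℝ≥0∞) {F : (∀ i, α i) → ℝ≥0∞} (hF : Measurable F)
    (h : ∀ i (x : ∀ i, α i), C i * ⨍⁻ u in s i, F (Function.update x i u) ∂μ i ≤
      ⨍⁻ u in t i, F (Function.update x i u) ∂μ i) :
    (∏ i, C i) * ⨍⁻ x in Set.univ.pi s, F x ∂Measure.pi μ ≤
      ⨍⁻ x in Set.univ.pi t, F x ∂Measure.pi μ := by
  have : ∀ i, IsProbabilityMeasure ((μ i)[|s i]) := fun i =>
    ProbabilityTheory.cond_isProbabilityMeasure_of_finite (hs₀ i) (hs_top i)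
  have : ∀ i, IsProbabilityMeasure ((μ i)[|t i]) := fun i =>
    ProbabilityTheory.cond_isProbabilityMeasure_of_finite (ht₀ i) (ht_top i)
  simp_rw [setLAverage_eq_lintegral_cond] at h ⊢
  rw [← Measure.pi_cond μ hs hs₀ hs_top, ← Measure.pi_cond μ ht ht₀ ht_top]
  exact prod_mul_lintegral_pi_le _ _ C hF h

end Cond

end MeasureTheory

noncomputable def expSum (Z : Finset ℝ) (c : ℝ → ℂ) (t : ℝ) : ℂ :=
  ∑ z ∈ Z, c z * exp (I * z * t)

noncomputable def multiExpSum {ι : Type*} [Fintype ι] [DecidableEq ι] (Z : ι → Finset ℝ)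
    (c : (ι → ℝ) → ℂ) (x : ι → ℝ) : ℂ :=
  ∑ k ∈ Fintype.piFinset Z, c k * exp (I * ((∑ j, k j * x j : ℝ) : ℂ))

theorem continuous_expSum (Z : Finset ℝ) (c : ℝ → ℂ) : Continuous (expSum Z c) := by
  unfold expSum; fun_prop

section Multi

variable {ι : Type*} [Fintype ι] [DecidableEq ι]

theorem continuous_multiExpSum (Z : ι → Finset ℝ) (c : (ι → ℝ) → ℂ) :
    Continuous (multiExpSum Z c) := by
  unfold multiExpSum; fun_prop

theorem sum_mul_update (k x : ι → ℝ) (j : ι) (t : ℝ) :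
    ∑ i, k i * Function.update x j t i = (∑ i, k i * x i - k j * x j) + k j * t := by
  rw [← Finset.sum_erase_add _ _ (Finset.mem_univ j),
    ← Finset.sum_erase_add _ (fun i => k i * x i) (Finset.mem_univ j),
    Finset.sum_congr rfl fun i hi => by rw [Function.update_of_ne (Finset.ne_of_mem_erase hi)]]
  simp

theorem multiExpSum_update (Z : ι → Finset ℝ) (c : (ι → ℝ) → ℂ) (x : ι → ℝ) (j : ι) :
    ∃ b : ℝ → ℂ, ∀ t, multiExpSum Z c (Function.update x j t) = expSum (Z j) b t := by
  refine ⟨fun z => ∑ k ∈ Fintype.piFinset Z with k j = z,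
    c k * exp (I * ((∑ i, k i * x i - z * x j : ℝ) : ℂ)), fun t => ?_⟩
  have hmaps : ∀ k ∈ Fintype.piFinset Z, k j ∈ Z j := fun k hk => Fintype.mem_piFinset.1 hk j
  rw [multiExpSum, expSum, ← Finset.sum_fiberwise_of_maps_to hmaps]
  refine Finset.sum_congr rfl fun z _ => ?_
  rw [Finset.sum_mul]
  refine Finset.sum_congr rfl fun k hk => ?_
  rw [(Finset.mem_filter.1 hk).2.symm, sum_mul_update, mul_assoc, ← exp_add]
  push_cast
  ring_nf

end Multi

theorem stmt17_general (d : ℕ) (p : ℝ) (hp : 0 < p)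
    (a b : Fin d → ℝ) (hab : ∀ j, a j < b j)
    (J : Fin d → Set ℝ) (hJm : ∀ j, MeasurableSet (J j))
    (hJsub : ∀ j, J j ⊆ Set.Ioo (a j) (b j)) (hJpos : ∀ j, 0 < volume (J j))
    (Z : Fin d → Finset ℝ)
    (κ : Fin d → ℝ) (hκ : ∀ j, κ j ∈ Set.Ioc (0 : ℝ) 1)
    (h1 : ∀ j, ∀ bc : ℝ → ℂ,
      κ j * (⨍ t in Set.Ioo (a j) (b j),
          ‖∑ z ∈ Z j, bc z * Complex.exp (Complex.I * (z : ℂ) * (t : ℂ))‖ ^ p) ^ (1 / p) ≤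
        (⨍ t in J j,
          ‖∑ z ∈ Z j, bc z * Complex.exp (Complex.I * (z : ℂ) * (t : ℂ))‖ ^ p) ^ (1 / p))
    (c : (Fin d → ℝ) → ℂ) :
    (∏ j, κ j) *
      (⨍ x in Set.univ.pi (fun j => Set.Ioo (a j) (b j)),
        ‖∑ k ∈ Fintype.piFinset Z, c k *
          Complex.exp (Complex.I * ((∑ j, k j * x j : ℝ) : ℂ))‖ ^ p) ^ (1 / p) ≤
      (⨍ x in Set.univ.pi J,
        ‖∑ k ∈ Fintype.piFinset Z, c k *
          Complex.exp (Complex.I * ((∑ j, k j * x j : ℝ) : ℂ))‖ ^ p) ^ (1 / p) := by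
  have hκ₀ : ∀ j, 0 ≤ κ j := fun j => (hκ j).1.le
  have hI_top : ∀ j, volume (Set.Ioo (a j) (b j)) ≠ ∞ := fun j => measure_Ioo_lt_top.ne
  have hQ : Set.univ.pi (fun j => Set.Ioo (a j) (b j)) ⊆ Set.Icc a b := fun x hx =>
    ⟨fun j => (hx j trivial).1.le, fun j => (hx j trivial).2.le⟩
  have hE : Set.univ.pi J ⊆ Set.Icc a b := (Set.pi_mono fun j _ => hJsub j).trans hQ
  have hf := (continuous_multiExpSum Z c).norm.rpow_const fun _ => Or.inr hp.le
  refine (mul_setAverage_rpow_le_iff (fun _ => by positivity) (hf.integrableOn_Icc.mono_set hQ)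
    (hf.integrableOn_Icc.mono_set hE) (Finset.prod_nonneg fun j _ => hκ₀ j) hp).2 ?_
  rw [← Real.finsetProd_rpow _ _ (fun j _ => hκ₀ j),
    ENNReal.ofReal_prod_of_nonneg (fun j _ => Real.rpow_nonneg (hκ₀ j) p)]
  refine prod_mul_setLAverage_pi_le _ (fun _ => measurableSet_Ioo) (fun j => by simp [hab j])
    hI_top hJm (fun j => (hJpos j).ne')
    (fun j => ne_top_of_le_ne_top (hI_top j) (measure_mono (hJsub j))) _
    hf.measurable.ennreal_ofReal fun j x => ?_
  obtain ⟨bc, hbc⟩ := multiExpSum_update Z c x j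
  simp_rw [hbc]
  have hg := (continuous_expSum (Z j) bc).norm.rpow_const fun _ => Or.inr hp.le
  exact (mul_setAverage_rpow_le_iff (fun _ => by positivity)
    (hg.integrableOn_Icc.mono_set Set.Ioo_subset_Icc_self)
    (hg.integrableOn_Icc.mono_set ((hJsub j).trans Set.Ioo_subset_Icc_self)) (hκ₀ j) hp).1
    (h1 j bc)

/-- Tensorized Nazarov–Turán inequality: if in each coordinate every univariate
exponential sum with frequencies in `Z j` satisfies
`(⨍_{J_j}|h|^p)^{1/p} ≥ κ_j (⨍_{I_j}|h|^p)^{1/p}`, then every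
`f(x) = ∑_{k ∈ ∏ Z_j} c_k e^{ik·x}` satisfies
`(⨍_E |f|^p)^{1/p} ≥ (∏ κ_j)(⨍_Q |f|^p)^{1/p}` with `Q = ∏ I_j`, `E = ∏ J_j`. -/
theorem stmt17 (d : ℕ) (hd : 1 ≤ d) (p : ℝ) (hp : 0 < p)
    (a b : Fin d → ℝ) (hab : ∀ j, a j < b j)
    (J : Fin d → Set ℝ) (hJm : ∀ j, MeasurableSet (J j))
    (hJsub : ∀ j, J j ⊆ Set.Ioo (a j) (b j)) (hJpos : ∀ j, 0 < volume (J j))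
    (Z : Fin d → Finset ℝ) (hZ : ∀ j, (Z j).Nonempty)
    (κ : Fin d → ℝ) (hκ : ∀ j, κ j ∈ Set.Ioc (0 : ℝ) 1)
    (h1 : ∀ j, ∀ bc : ℝ → ℂ,
      κ j * (⨍ t in Set.Ioo (a j) (b j),
          ‖∑ z ∈ Z j, bc z * Complex.exp (Complex.I * (z : ℂ) * (t : ℂ))‖ ^ p) ^ (1 / p) ≤
        (⨍ t in J j,
          ‖∑ z ∈ Z j, bc z * Complex.exp (Complex.I * (z : ℂ) * (t : ℂ))‖ ^ p) ^ (1 / p))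
    (c : (Fin d → ℝ) → ℂ) :
    (∏ j, κ j) *
      (⨍ x in Set.univ.pi (fun j => Set.Ioo (a j) (b j)),
        ‖∑ k ∈ Fintype.piFinset Z, c k *
          Complex.exp (Complex.I * ((∑ j, k j * x j : ℝ) : ℂ))‖ ^ p) ^ (1 / p) ≤
      (⨍ x in Set.univ.pi J,
        ‖∑ k ∈ Fintype.piFinset Z, c k *
          Complex.exp (Complex.I * ((∑ j, k j * x j : ℝ) : ℂ))‖ ^ p) ^ (1 / p) :=
  stmt17_general d p hp a b hab J hJm hJsub hJpos Z κ hκ h1 c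
end

section
/- Let d ≥ 2 and suppose N ∈ ℕ satisfies C(N+d−1, d−1) + C(N+d−2, d−1) < M for some integer M. If Λ ⊂ ℝ^d is a set of M points all lying on a common sphere centered at the origin, then there exists a nonzero exponential polynomial u(x) = ∑_{k∈Λ} c_k e^{ik·x} all of whose partial derivatives of order ≤ N vanish at the origin. -/
/-!
Up to the constant `iⁿ`, the `n`-th derivative at `0` of `u = ∑ c_k e^{i k·x}` is the `n`-linear
form `w ↦ ∑_k c_k ∏_m ⟨k, w_m⟩`, a combination of the moments `∑_k c_k k^β` with `|β| = n`.
On the sphere `|k|² = λ²`, the relation `k_i² = λ² - ∑_{j ≠ i} k_j²` expresses every moment of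
order `≤ N` through moments whose `i`-th exponent is `0` or `1`. There are at most
`C(N+d-1, d-1) + C(N+d-2, d-1) < M` such moments, so some nonzero `c` annihilates all of them.
-/

open Finset Complex

section Counting

variable {ι : Type*} [Fintype ι] [DecidableEq ι]

theorem card_piAntidiag_univ (B : ℕ) :
    #(piAntidiag (univ : Finset ι) B) = (Fintype.card ι + B - 1).choose B := by
  rw [← map_sym_eq_piAntidiag, card_map, sym_univ, card_univ, Sym.card_sym_eq_choose]

theorem card_le_choose_of_forall_apply_eq (i : ι) (v B : ℕ) {S : Finset (ι → ℕ)}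
    (hS : ∀ β ∈ S, β i = v ∧ ∑ j, β j ≤ v + B) :
    #S ≤ (Fintype.card ι + B - 1).choose B := by
  -- Moving the slack `v + B - |β|` into coordinate `i` gives an injection into the multi-indices
  -- of total degree `B`.
  rw [← card_piAntidiag_univ]
  refine card_le_card_of_injOn (fun β => Function.update β i (v + B - ∑ j, β j)) ?_ ?_
  · intro β hβ
    obtain ⟨hβi, hβB⟩ := hS β hβ
    simp only [mem_coe, mem_piAntidiag, mem_univ, implies_true, and_true]
    rw [sum_update_of_mem (mem_univ i)]
    have := sum_eq_add_sum_sdiff_singleton_of_mem (mem_univ i) β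
    omega
  · intro β hβ β' hβ' hββ'
    funext j
    rcases eq_or_ne j i with rfl | hj
    · rw [(hS β hβ).1, (hS β' hβ').1]
    · simpa [Function.update_of_ne hj] using congr_fun hββ' j

-- The paper's `Σ₀ ∪ Σ₁`, with `i` in the role of the last coordinate.
def reducedIndices (i : ι) (N : ℕ) : Finset (ι → ℕ) :=
  {β ∈ Fintype.piFinset fun _ => range (N + 1) | ∑ j, β j ≤ N ∧ β i ≤ 1}

theorem mem_reducedIndices {i : ι} {N : ℕ} {β : ι → ℕ} :
    β ∈ reducedIndices i N ↔ ∑ j, β j ≤ N ∧ β i ≤ 1 := by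
  simp only [reducedIndices, mem_filter, Fintype.mem_piFinset, mem_range, and_iff_right_iff_imp]
  exact fun h j =>
    Nat.lt_succ_of_le ((single_le_sum (fun _ _ => Nat.zero_le _) (mem_univ j)).trans h.1)

theorem card_reducedIndices_le (i : ι) (N : ℕ) :
    #(reducedIndices i N) ≤ (N + Fintype.card ι - 1).choose (Fintype.card ι - 1) +
      (N + Fintype.card ι - 2).choose (Fintype.card ι - 1) := by
  obtain ⟨m, hm⟩ : ∃ m, Fintype.card ι = m + 1 :=
    ⟨_, (Nat.succ_pred_eq_of_pos (Fintype.card_pos_iff.2 ⟨i⟩)).symm⟩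
  have hchoose (B : ℕ) : (m + 1 + B - 1).choose B = (B + m).choose m := by
    rw [show m + 1 + B - 1 = m + B by omega, ← Nat.choose_symm_add, add_comm]
  rw [← card_filter_add_card_filter_not (fun β => β i = 0)]
  gcongr
  · refine (card_le_choose_of_forall_apply_eq i 0 N fun β hβ => ?_).trans_eq ?_
    · simp only [mem_filter, mem_reducedIndices] at hβ
      omega
    · rw [hm, hchoose]
      congr 1
  · rcases N with _ | N
    · refine (card_eq_zero.2 (filter_eq_empty_iff.2 fun β hβ => ?_)).trans_le (Nat.zero_le _)
      rw [not_not]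
      exact Nat.eq_zero_of_le_zero
        ((single_le_sum (fun _ _ => Nat.zero_le _) (mem_univ i)).trans (mem_reducedIndices.1 hβ).1)
    · refine (card_le_choose_of_forall_apply_eq i 1 N fun β hβ => ?_).trans_eq ?_
      · simp only [mem_filter, mem_reducedIndices] at hβ
        omega
      · rw [hm, hchoose]
        congr 1
        omega

end Counting

section Moments

variable {ι : Type*} [Fintype ι]

noncomputable def moment (Λ : Finset (ι → ℝ)) (c : (ι → ℝ) → ℂ) (β : ι → ℕ) : ℂ :=
  ∑ k ∈ Λ, (∏ j, k j ^ β j) • c k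

theorem exists_ne_zero_moment_eq_zero (Λ : Finset (ι → ℝ)) {S : Finset (ι → ℕ)}
    (hS : #S < #Λ) : ∃ c : (ι → ℝ) → ℂ, (∃ k ∈ Λ, c k ≠ 0) ∧ ∀ β ∈ S, moment Λ c β = 0 := by
  classical
  let v : Λ → S → ℂ := fun k β => ((∏ j, (k : ι → ℝ) j ^ (β : ι → ℕ) j : ℝ) : ℂ)
  have hv : ¬LinearIndependent ℂ v := fun h => by
    have := h.fintype_card_le_finrank
    simp only [Fintype.card_coe, Module.finrank_fintype_fun_eq_card] at this
    omega
  obtain ⟨g, hg, k, hk⟩ := Fintype.not_linearIndependent_iff.1 hv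
  refine ⟨fun x => if hx : x ∈ Λ then g ⟨x, hx⟩ else 0, ⟨k, k.2, by simpa using hk⟩, ?_⟩
  intro β hβ
  have := congr_fun hg ⟨β, hβ⟩
  rw [moment, ← sum_coe_sort Λ]
  simpa [v, real_smul, mul_comm] using this

variable [DecidableEq ι]

theorem sum_moment_add_single_two {Λ : Finset (ι → ℝ)} {r : ℝ}
    (hΛ : ∀ k ∈ Λ, ∑ j, k j ^ 2 = r) (c : (ι → ℝ) → ℂ) (β : ι → ℕ) :
    ∑ j, moment Λ c (β + Pi.single j 2) = r • moment Λ c β := by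
  have hprod (k : ι → ℝ) (j : ι) :
      ∏ i, k i ^ (β + Pi.single j 2 : ι → ℕ) i = k j ^ 2 * ∏ i, k i ^ β i := by
    simp only [Pi.add_apply, pow_add, prod_mul_distrib, Pi.single_apply, pow_ite, pow_zero,
      Fintype.prod_ite_eq', mul_comm]
  simp only [moment, hprod]
  rw [sum_comm, smul_sum]
  refine sum_congr rfl fun k hk => ?_
  rw [← sum_smul, ← sum_mul, hΛ k hk, smul_smul]

theorem moment_eq_zero_of_forall_apply_le_one {Λ : Finset (ι → ℝ)} {r : ℝ}
    (hΛ : ∀ k ∈ Λ, ∑ j, k j ^ 2 = r) {c : (ι → ℝ) → ℂ} {N : ℕ} (i : ι)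
    (h : ∀ β : ι → ℕ, ∑ j, β j ≤ N → β i ≤ 1 → moment Λ c β = 0)
    (β : ι → ℕ) (hβ : ∑ j, β j ≤ N) : moment Λ c β = 0 := by
  induction hm : β i using Nat.strong_induction_on generalizing β with
  | _ m ih =>
  rcases le_or_gt m 1 with hm1 | hm1
  · exact h β hβ (hm ▸ hm1)
  set γ := β - Pi.single i 2
  have hβγ : γ + Pi.single i 2 = β := by
    ext l
    rcases eq_or_ne l i with rfl | hl
    · simp only [γ, Pi.add_apply, Pi.sub_apply, Pi.single_eq_same]
      omega
    · simp [γ, hl]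
  have hsum (j : ι) : ∑ l, (γ + Pi.single j 2 : ι → ℕ) l = ∑ l, β l := by
    simp only [← hβγ, Pi.add_apply, sum_add_distrib, sum_pi_single', if_pos (mem_univ _)]
  have hγ : moment Λ c γ = 0 :=
    ih (m - 2) (by omega) γ ((sum_le_sum fun l _ => Nat.sub_le (β l) _).trans hβ)
      (by simp [γ, hm])
  -- In `∑ⱼ moment (γ + 2eⱼ) = r • moment γ` every term but `j = i` has `i`-th entry `m - 2`.
  have key := sum_moment_add_single_two hΛ c γ
  rwa [hγ, smul_zero, sum_eq_single_of_mem i (mem_univ i), hβγ] at key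
  intro j _ hj
  exact ih (m - 2) (by omega) _ (hsum j ▸ hβ) (by simp [γ, hm, hj.symm])

end Moments

section Derivatives

variable {ι : Type*} [Fintype ι]

theorem prod_sum_mul_eq_sum_prod_pow {κ R : Type*} [Fintype κ] [DecidableEq κ] [DecidableEq ι]
    [CommSemiring R] (x : ι → R) (w : κ → ι → R) :
    ∏ i, ∑ j, x j * w i j = ∑ g : κ → ι, (∏ i, w i (g i)) * ∏ j, x j ^ #{i | g i = j} := by
  rw [prod_univ_sum, Fintype.piFinset_univ]
  refine sum_congr rfl fun g _ => ?_
  rw [prod_mul_distrib, mul_comm, ← prod_fiberwise' univ g x]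
  simp only [prod_const]

theorem contDiff_cexp_I_mul_dotProduct (k : ι → ℝ) {n : WithTop ℕ∞} :
    ContDiff ℝ n fun y : ι → ℝ => cexp (I * ↑(∑ j, k j * y j)) :=
  (contDiff_const.mul (ofRealCLM.contDiff.comp
    (ContDiff.sum fun j _ => contDiff_const.mul (contDiff_apply ℝ ℝ j)))).cexp

theorem iteratedFDeriv_cexp_I_mul_dotProduct_apply (k x : ι → ℝ) {n : ℕ} (w : Fin n → ι → ℝ) :
    iteratedFDeriv ℝ n (fun y : ι → ℝ => cexp (I * ↑(∑ j, k j * y j))) x w =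
      (∏ i, ∑ j, k j * w i j) • iteratedDeriv n (fun t : ℝ => cexp (I * t)) (∑ j, k j * x j) := by
  let ℓ : (ι → ℝ) →L[ℝ] ℝ := ∑ j, k j • ContinuousLinearMap.proj j
  have hℓ (y : ι → ℝ) : ℓ y = ∑ j, k j * y j := by simp [ℓ]
  have hcomp : (fun y : ι → ℝ => cexp (I * ↑(∑ j, k j * y j))) =
      (fun t : ℝ => cexp (I * t)) ∘ ℓ := by
    funext y
    simp [hℓ]
  have hsmooth : ContDiff ℝ ⊤ (fun t : ℝ => cexp (I * t)) :=
    (contDiff_const.mul ofRealCLM.contDiff).cexp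
  rw [hcomp, ℓ.iteratedFDeriv_comp_right hsmooth _ le_top,
    ContinuousMultilinearMap.compContinuousLinearMap_apply,
    iteratedFDeriv_apply_eq_iteratedDeriv_mul_prod]
  simp [hℓ]

theorem iteratedFDeriv_sum_mul_cexp_zero_eq_zero {Λ : Finset (ι → ℝ)}
    {c : (ι → ℝ) → ℂ} {n : ℕ} (h : ∀ β : ι → ℕ, ∑ j, β j = n → moment Λ c β = 0) :
    iteratedFDeriv ℝ n (fun x : ι → ℝ => ∑ k ∈ Λ, c k * cexp (I * ↑(∑ j, k j * x j))) 0 = 0 := by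
  classical
  -- `a = iⁿ`; all that matters is that it does not depend on `k`.
  set a := iteratedDeriv n (fun t : ℝ => cexp (I * t)) 0
  have hterm (k : ι → ℝ) :
      iteratedFDeriv ℝ n (fun x : ι → ℝ => c k * cexp (I * ↑(∑ j, k j * x j))) 0 =
        c k • iteratedFDeriv ℝ n (fun x : ι → ℝ => cexp (I * ↑(∑ j, k j * x j))) 0 :=
    iteratedFDeriv_const_smul_apply' (a := c k) (contDiff_cexp_I_mul_dotProduct k).contDiffAt
  have hcard (g : Fin n → ι) : ∑ j, #{i | g i = j} = n := by
    rw [← card_eq_sum_card_fiberwise fun i _ => mem_univ (g i), card_univ, Fintype.card_fin]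
  ext w
  rw [iteratedFDeriv_sum fun k _ => contDiff_const.mul (contDiff_cexp_I_mul_dotProduct k),
    Finset.sum_apply, _root_.sum_apply]
  simp only [hterm, smul_apply, iteratedFDeriv_cexp_I_mul_dotProduct_apply, Pi.zero_apply,
    mul_zero, sum_const_zero, prod_sum_mul_eq_sum_prod_pow, zero_apply]
  calc ∑ k ∈ Λ, c k • (∑ g : Fin n → ι, (∏ i, w i (g i)) * ∏ j, k j ^ #{i | g i = j}) • a
      = a * ∑ g : Fin n → ι, (∏ i, w i (g i)) • moment Λ c fun j => #{i | g i = j} := by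
        simp only [moment, smul_sum, sum_smul, mul_sum, mul_smul]
        refine (sum_comm).trans (sum_congr rfl fun g _ => sum_congr rfl fun k _ => ?_)
        simp only [real_smul, smul_eq_mul]
        ring
    _ = 0 := by simp [h _ (hcard _)]

end Derivatives

/-- If `C(N+d-1, d-1) + C(N+d-2, d-1) < M` and `Λ` is a set of `M` points on a common
sphere centered at the origin, then some nonzero exponential polynomial with
frequencies in `Λ` has all derivatives of order `≤ N` vanishing at the origin. -/
theorem stmt18 (d : ℕ) (hd : 2 ≤ d) (N M : ℕ)
    (hNM : (N + d - 1).choose (d - 1) + (N + d - 2).choose (d - 1) < M)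
    (Λ : Finset (Fin d → ℝ)) (hcard : Λ.card = M)
    (lam : ℝ) (hsphere : ∀ k ∈ Λ, ∑ j, (k j) ^ 2 = lam ^ 2) :
    ∃ c : (Fin d → ℝ) → ℂ, (∃ k ∈ Λ, c k ≠ 0) ∧
      ∀ n : ℕ, n ≤ N →
        iteratedFDeriv ℝ n
          (fun x : Fin d → ℝ => ∑ k ∈ Λ, c k *
            Complex.exp (Complex.I * ((∑ j, k j * x j : ℝ) : ℂ))) 0 = 0 := by
  let i : Fin d := ⟨0, by omega⟩
  have hS : #(reducedIndices i N) < #Λ := by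
    rw [hcard]
    exact (card_reducedIndices_le i N).trans_lt (by rwa [Fintype.card_fin])
  obtain ⟨c, hc, hmom⟩ := exists_ne_zero_moment_eq_zero Λ hS
  refine ⟨c, hc, fun n hn => iteratedFDeriv_sum_mul_cexp_zero_eq_zero fun β hβ => ?_⟩
  exact moment_eq_zero_of_forall_apply_le_one hsphere i
    (fun β h₁ h₂ => hmom β (mem_reducedIndices.2 ⟨h₁, h₂⟩)) β (hβ.trans_le hn)
end
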